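/- Suppose π* ≥ 1 satisfies Φ(π*) = c. Then for every deterministic online algorithm A there exists d ∈ D such that σ(d) ≥ π* · σ_A(d); that is, no deterministic online algorithm achieves a competitive ratio strictly smaller than π*, so π* is the best possible competitive ratio among all online algorithms for the peak-demand reduction maximization problem. -/

import Mathlib

open Finset MeasureTheory

noncomputable section

/-- A discharging vector `δ` is feasible for demand profile `d` (with capacity `c`
and per-slot limit `dmax`). -/
def Feasible {T : ℕ} (c dmax : ℝ) (d δ : Fin T → ℝ) : Prop :=
  (∑ t, δ t) ≤ c ∧ ∀ t, 0 ≤ δ t ∧ δ t ≤ min dmax (d t)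

/-- Peak-demand reduction `R(d, δ)`. -/
noncomputable def Red {T : ℕ} (d δ : Fin T → ℝ) : ℝ :=
  (⨆ t, d t) - ⨆ t, (d t - δ t)

/-- Offline optimal peak-demand reduction `σ(d)`. -/
noncomputable def offOpt {T : ℕ} (c dmax : ℝ) (d : Fin T → ℝ) : ℝ :=
  sSup {r | ∃ δ : Fin T → ℝ, Feasible c dmax d δ ∧ r = Red d δ}

/-- Prefix maximum `max_{k ∈ [t]} d_k`. -/
noncomputable def prefMax {T : ℕ} (d : Fin T → ℝ) (t : Fin T) : ℝ :=
  ⨆ k : {k : Fin T // k ≤ t}, d k.1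

/-- The uncertainty set `D`: all profiles with entries in `[dlo, dhi]`. -/
def inD {T : ℕ} (dlo dhi : ℝ) (d : Fin T → ℝ) : Prop :=
  ∀ t, dlo ≤ d t ∧ d t ≤ dhi

/-- Reference profile `d^t`: observed demands up to slot `t`, lowest demand `dlo` afterwards. -/
def ref {T : ℕ} (dlo : ℝ) (d : Fin T → ℝ) (t : Fin T) : Fin T → ℝ :=
  fun k => if k ≤ t then d k else dlo

/-- Output of `pCR-PRM(π)` at slot `t`:
`δ_t(π, d) = [d_t − max_{k∈[t]} d_k + σ(d^t)/π]⁺`. -/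
noncomputable def pcr {T : ℕ} (c dmax dlo : ℝ) (π : ℝ) (d : Fin T → ℝ) (t : Fin T) : ℝ :=
  max (d t - prefMax d t + offOpt c dmax (ref dlo d t) / π) 0

/-- Inventory function `Φ(π) = sup_{d ∈ D} ∑_t δ_t(π, d)`. -/
noncomputable def Phi (T : ℕ) (c dmax dlo dhi : ℝ) (π : ℝ) : ℝ :=
  sSup {s | ∃ d : Fin T → ℝ, inD dlo dhi d ∧ s = ∑ t, pcr c dmax dlo π d t}

/-!
If an online algorithm `A` beat ratio `π` on every profile, then at each slot `t`
it would beat it on the reference profile `d^t`, which agrees with `d` up to `t`; by causality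
this forces `A d t > d_t - max_{k ≤ t} d_k + σ(d^t)/π`, so `A` discharges at least as much as
pCR-PRM(π) in every slot, and strictly more wherever pCR-PRM(π) discharges. The inventory of
pCR-PRM(π) is continuous in `d` on the compact set `D`, so `Φ(π) = c` is attained at some `d`;
there `A` would discharge more than `c`.
-/

lemma ciSup_le_ciSup_add {ι : Type*} [Nonempty ι] [Finite ι] {f g : ι → ℝ} {a : ℝ}
    (h : ∀ i, f i ≤ g i + a) : ⨆ i, f i ≤ (⨆ i, g i) + a :=
  ciSup_le fun i => (h i).trans (by gcongr; exact le_ciSup (Set.finite_range g).bddAbove i)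

lemma le_add_dist_apply {ι : Type*} [Fintype ι] (d d' : ι → ℝ) (i : ι) :
    d i ≤ d' i + dist d d' := by
  linarith [Real.sub_le_dist (d i) (d' i), dist_le_pi_dist d d' i]

section OfflineOptimum

variable {T : ℕ} {c dmax : ℝ}

lemma feasible_zero (hc : 0 ≤ c) (hdmax : 0 ≤ dmax) {d : Fin T → ℝ} (hd : ∀ t, 0 ≤ d t) :
    Feasible c dmax d 0 :=
  ⟨by simpa using hc, fun t => ⟨le_rfl, le_min hdmax (hd t)⟩⟩

lemma Red_le_iSup [Nonempty (Fin T)] {d δ : Fin T → ℝ} (hδ : ∀ t, δ t ≤ d t) :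
    Red d δ ≤ ⨆ t, d t := by
  obtain ⟨t⟩ := ‹Nonempty (Fin T)›
  have : d t - δ t ≤ ⨆ k, (d k - δ k) :=
    le_ciSup (f := fun k => d k - δ k) (Set.finite_range _).bddAbove t
  unfold Red
  linarith [hδ t]

lemma Red_le_offOpt [Nonempty (Fin T)] {d δ : Fin T → ℝ} (hδ : Feasible c dmax d δ) :
    Red d δ ≤ offOpt c dmax d := by
  refine le_csSup ⟨⨆ t, d t, ?_⟩ ⟨δ, hδ, rfl⟩
  rintro r ⟨δ, hδ, rfl⟩
  exact Red_le_iSup fun t => (hδ.2 t).2.trans (min_le_right _ _)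

lemma offOpt_le_add_dist [Nonempty (Fin T)] (hc : 0 ≤ c) (hdmax : 0 ≤ dmax)
    {d d' : Fin T → ℝ} (hd : ∀ t, 0 ≤ d t) (hd' : ∀ t, 0 ≤ d' t) :
    offOpt c dmax d ≤ offOpt c dmax d' + 2 * dist d d' := by
  refine csSup_le ⟨0, 0, feasible_zero hc hdmax hd, by simp [Red]⟩ ?_
  rintro r ⟨δ, hδ, rfl⟩
  set ε := dist d d'
  -- truncating `δ` to the limits of `d'` raises no net demand by more than `ε`
  set δ' : Fin T → ℝ := fun t => min (δ t) (min dmax (d' t))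
  have hδ' : Feasible c dmax d' δ' :=
    ⟨(sum_le_sum fun t _ => min_le_left _ _).trans hδ.1,
      fun t => ⟨le_min (hδ.2 t).1 (le_min hdmax (hd' t)), min_le_right _ _⟩⟩
  have hpeak : ⨆ t, d t ≤ (⨆ t, d' t) + ε :=
    ciSup_le_ciSup_add fun t => le_add_dist_apply d d' t
  have hnet : ⨆ t, (d' t - δ' t) ≤ (⨆ t, (d t - δ t)) + ε := by
    refine ciSup_le_ciSup_add fun t => ?_
    have hclose : d' t ≤ d t + ε := by simpa only [dist_comm] using le_add_dist_apply d' d t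
    have hε : 0 ≤ ε := dist_nonneg
    have hδt := (hδ.2 t).2
    have hmin := min_le_left dmax (d t)
    have hmin' := min_le_right dmax (d t)
    have : d' t - (d t - δ t + ε) ≤ δ' t :=
      le_min (by linarith) (le_min (by linarith) (by linarith))
    linarith
  have := Red_le_offOpt hδ'
  unfold Red at *
  linarith

lemma lipschitzOnWith_offOpt [Nonempty (Fin T)] (hc : 0 ≤ c) (hdmax : 0 ≤ dmax) :
    LipschitzOnWith 2 (offOpt (T := T) c dmax) {d | ∀ t, 0 ≤ d t} :=
  LipschitzOnWith.of_le_add_mul 2 fun _ hd _ hd' => by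
    exact_mod_cast offOpt_le_add_dist hc hdmax hd hd'

end OfflineOptimum

section PrefixProfiles

variable {T : ℕ} {dlo : ℝ}

lemma lipschitzWith_prefMax (t : Fin T) : LipschitzWith 1 fun d : Fin T → ℝ => prefMax d t :=
  have : Nonempty {k : Fin T // k ≤ t} := ⟨⟨t, le_rfl⟩⟩
  LipschitzWith.of_le_add fun d d' => ciSup_le_ciSup_add fun k => le_add_dist_apply d d' k

lemma continuous_ref (t : Fin T) : Continuous fun d : Fin T → ℝ => ref dlo d t :=
  continuous_pi fun k => by
    unfold ref
    split_ifs
    exacts [continuous_apply k, continuous_const]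

lemma ref_nonneg (hdlo : 0 ≤ dlo) {d : Fin T → ℝ} (hd : ∀ k, 0 ≤ d k) (t k : Fin T) :
    0 ≤ ref dlo d t k := by
  unfold ref
  split_ifs
  exacts [hd k, hdlo]

lemma inD_ref {dhi : ℝ} (hbd : dlo ≤ dhi) {d : Fin T → ℝ} (hd : inD dlo dhi d) (t : Fin T) :
    inD dlo dhi (ref dlo d t) := fun k => by
  unfold ref
  split_ifs
  exacts [hd k, ⟨le_rfl, hbd⟩]

lemma iSup_ref {d : Fin T → ℝ} (hd : ∀ k, dlo ≤ d k) (t : Fin T) :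
    ⨆ k, ref dlo d t k = prefMax d t := by
  have : Nonempty (Fin T) := ⟨t⟩
  have : Nonempty {k : Fin T // k ≤ t} := ⟨⟨t, le_rfl⟩⟩
  have hbdd : BddAbove (Set.range fun k : {k : Fin T // k ≤ t} => d k.1) :=
    (Set.finite_range _).bddAbove
  refine le_antisymm ?_ ?_
  · refine ciSup_le fun k => ?_
    unfold ref
    split_ifs with hk
    · exact le_ciSup hbdd ⟨k, hk⟩
    · exact (hd t).trans (le_ciSup hbdd ⟨t, le_rfl⟩)
  · refine ciSup_le fun k => ?_
    have : ref dlo d t k.1 = d k.1 := if_pos k.2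
    exact this ▸ le_ciSup (Set.finite_range _).bddAbove k.1

lemma Red_ref_le {d : Fin T → ℝ} (hd : ∀ k, dlo ≤ d k) (δ : Fin T → ℝ) (t : Fin T) :
    Red (ref dlo d t) δ ≤ prefMax d t - (d t - δ t) := by
  have hnet : ref dlo d t t - δ t ≤ ⨆ k, (ref dlo d t k - δ k) :=
    le_ciSup (f := fun k => ref dlo d t k - δ k) (Set.finite_range _).bddAbove t
  rw [show ref dlo d t t = d t from if_pos le_rfl] at hnet
  unfold Red
  rw [iSup_ref hd t]
  linarith

end PrefixProfiles

section Inventory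

variable {T : ℕ} {c dmax dlo dhi π : ℝ}

lemma continuousOn_pcr [Nonempty (Fin T)] (hc : 0 ≤ c) (hdmax : 0 ≤ dmax) (hdlo : 0 ≤ dlo)
    (t : Fin T) : ContinuousOn (fun d => pcr c dmax dlo π d t) {d | ∀ k, 0 ≤ d k} := by
  have hoff : ContinuousOn (fun d => offOpt c dmax (ref dlo d t)) {d | ∀ k, 0 ≤ d k} :=
    (lipschitzOnWith_offOpt hc hdmax).continuousOn.comp (continuous_ref t).continuousOn
      fun d hd => ref_nonneg hdlo hd t
  exact ((((continuous_apply t).sub (lipschitzWith_prefMax t).continuous).continuousOn.add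
    (hoff.div_const π)).sup continuousOn_const)

lemma isCompact_inD : IsCompact {d : Fin T → ℝ | inD dlo dhi d} := by
  convert isCompact_univ_pi fun _ : Fin T => isCompact_Icc (a := dlo) (b := dhi)
  ext d
  simp only [inD, Set.mem_ofPred_eq, Set.mem_univ_pi, Set.mem_Icc]

lemma exists_sum_pcr_eq_Phi [Nonempty (Fin T)] (hc : 0 ≤ c) (hdmax : 0 ≤ dmax) (hdlo : 0 ≤ dlo)
    (hbd : dlo ≤ dhi) :
    ∃ d : Fin T → ℝ, inD dlo dhi d ∧ Phi T c dmax dlo dhi π = ∑ t, pcr c dmax dlo π d t := by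
  have hcont : ContinuousOn (fun d => ∑ t, pcr c dmax dlo π d t) {d | inD dlo dhi d} :=
    continuousOn_finsetSum _ fun t _ => (continuousOn_pcr (T := T) hc hdmax hdlo t).mono
      fun d hd k => hdlo.trans (hd k).1
  obtain ⟨d, hd, hmax⟩ :=
    isCompact_inD.exists_isMaxOn ⟨fun _ => dlo, fun _ => ⟨le_rfl, hbd⟩⟩ hcont
  refine ⟨d, hd, IsGreatest.csSup_eq ⟨⟨d, hd, rfl⟩, ?_⟩⟩
  rintro s ⟨d', hd', rfl⟩
  exact hmax hd'

end Inventory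

section OnlineAlgorithm

variable {T : ℕ} {c dmax dlo dhi π : ℝ} {A : (Fin T → ℝ) → (Fin T → ℝ)}

lemma sub_prefMax_add_offOpt_ref_div_lt (hbd : dlo ≤ dhi) (hπ : 0 < π)
    (hcausal : ∀ d d' : Fin T → ℝ, inD dlo dhi d → inD dlo dhi d' →
      ∀ t : Fin T, (∀ k : Fin T, k ≤ t → d k = d' k) → A d t = A d' t)
    (hbeat : ∀ d, inD dlo dhi d → offOpt c dmax d < π * Red d (A d))
    {d : Fin T → ℝ} (hd : inD dlo dhi d) (t : Fin T) :
    d t - prefMax d t + offOpt c dmax (ref dlo d t) / π < A d t := by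
  have href := inD_ref hbd hd t
  have hA : A (ref dlo d t) t = A d t :=
    hcausal _ d href hd t fun k hk => if_pos hk
  have hred := Red_ref_le (fun k => (hd k).1) (A (ref dlo d t)) t
  rw [hA] at hred
  have : offOpt c dmax (ref dlo d t) / π < Red (ref dlo d t) (A (ref dlo d t)) :=
    (div_lt_iff₀' hπ).2 (hbeat _ href)
  linarith

lemma sum_pcr_lt_sum_of_beats (hbd : dlo ≤ dhi) (hπ : 0 < π)
    (hcausal : ∀ d d' : Fin T → ℝ, inD dlo dhi d → inD dlo dhi d' →
      ∀ t : Fin T, (∀ k : Fin T, k ≤ t → d k = d' k) → A d t = A d' t)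
    (hnonneg : ∀ d, inD dlo dhi d → ∀ t, 0 ≤ A d t)
    (hbeat : ∀ d, inD dlo dhi d → offOpt c dmax d < π * Red d (A d))
    {d : Fin T → ℝ} (hd : inD dlo dhi d) (hpos : 0 < ∑ t, pcr c dmax dlo π d t) :
    ∑ t, pcr c dmax dlo π d t < ∑ t, A d t := by
  have hlt := sub_prefMax_add_offOpt_ref_div_lt hbd hπ hcausal hbeat hd
  obtain ⟨t₀, -, ht₀⟩ := exists_lt_of_sum_lt (f := fun _ => (0 : ℝ)) (by simpa using hpos)
  refine sum_lt_sum (fun t _ => max_le (hlt t).le (hnonneg d hd t)) ⟨t₀, mem_univ _, ?_⟩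
  have hx := (lt_max_iff.1 ht₀).resolve_right (lt_irrefl 0)
  rw [pcr, max_eq_left hx.le]
  exact hlt t₀

end OnlineAlgorithm

/-- if `Φ(π*) = c`, then no deterministic online algorithm (causal and
feasible on `D`) achieves a competitive ratio strictly smaller than `π*`:
there exists `d ∈ D` with `σ(d) ≥ π* · σ_A(d)`. -/
theorem stmt13 (T : ℕ) (hT : 0 < T) (c dmax dlo dhi : ℝ)
    (hc : 0 < c) (hdmax : 0 < dmax) (hdlo : 0 < dlo) (hbd : dlo ≤ dhi)
    (π : ℝ) (hπ : 1 ≤ π) (hΦ : Phi T c dmax dlo dhi π = c)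
    (A : (Fin T → ℝ) → (Fin T → ℝ))
    (hcausal : ∀ d d' : Fin T → ℝ, inD dlo dhi d → inD dlo dhi d' →
      ∀ t : Fin T, (∀ k : Fin T, k ≤ t → d k = d' k) → A d t = A d' t)
    (hAfeas : ∀ d : Fin T → ℝ, inD dlo dhi d → Feasible c dmax d (A d)) :
    ∃ d : Fin T → ℝ, inD dlo dhi d ∧ π * Red d (A d) ≤ offOpt c dmax d := by
  have : Nonempty (Fin T) := ⟨⟨0, hT⟩⟩
  by_contra! hbeat
  obtain ⟨d, hd, hΦd⟩ := exists_sum_pcr_eq_Phi (T := T) (π := π) hc.le hdmax.le hdlo.le hbd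
  have hlt := sum_pcr_lt_sum_of_beats hbd (by linarith) hcausal
    (fun d hd t => ((hAfeas d hd).2 t).1) hbeat hd (by linarith)
  linarith [(hAfeas d hd).1]
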